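/- For every finite MDP D = (S, s_init, A, δ, w) with strictly positive integer weights, every target set T ⊆ S and all thresholds ℓ₁, ℓ₂ ∈ ℕ: if there exists a strategy σ such that every run consistent with σ satisfies TS^T(ρ) ≤ ℓ₁ and E^σ(TS^T) ≤ ℓ₂, then there exists a pure strategy σ' whose choice after a history s₁a₁…s_n depends only on the pair (s_n, Σ_{i=1}^{n-1} w(a_i)) — a pure finite-memory strategy, since the accumulated weight stays at most ℓ₁ along runs consistent with σ' — such that every run consistent with σ' satisfies TS^T(ρ) ≤ ℓ₁ and E^{σ'}(TS^T) ≤ ℓ₂. -/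

import Mathlib

open scoped NNReal ENNReal

/-- A finite Markov decision process: finite state space `S`, finite action space `A`,
an initial state, a nonempty set of available actions in each state, and a probabilistic
transition function (a probability distribution over successors for each available action). -/
structure MDP (S A : Type) [Fintype S] [Fintype A] where
  init : S
  avail : S → Finset A
  avail_nonempty : ∀ s, (avail s).Nonempty
  tr : S → A → S → ℝ≥0
  tr_sum : ∀ s a, a ∈ avail s → ∑ s' : S, tr s a s' = 1

section Core

variable {S A : Type} [Fintype S] [Fintype A]

/-- A history `s₁ a₁ s₂ a₂ … a_{n-1} s_n` (with `s₁ = init`) is encoded as the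
list of steps `[(a₁, s₂), …, (a_{n-1}, s_n)]`. -/
def lastState (M : MDP S A) (h : List (A × S)) : S :=
  (h.getLast?).elim M.init Prod.snd

/-- A (randomized, history-dependent) strategy: to every history it assigns a
probability distribution over actions. -/
abbrev Strat (S A : Type) := List (A × S) → A → ℝ≥0

/-- The distributions prescribed by a strategy are supported on available actions and
sum up to one. -/
def IsStrategy (M : MDP S A) (σ : Strat S A) : Prop :=
  ∀ h : List (A × S),
    (∀ a, a ∉ M.avail (lastState M h) → σ h a = 0) ∧ ∑ a : A, σ h a = 1

/-- A strategy is pure if it always prescribes a Dirac distribution. -/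
def IsPure (σ : Strat S A) : Prop := ∀ h, ∃ a, σ h a = 1

/-- A strategy is memoryless if its choice only depends on the last state of the history. -/
def IsMemoryless (M : MDP S A) (σ : Strat S A) : Prop :=
  ∀ h h' : List (A × S), lastState M h = lastState M h' → σ h = σ h'

/-- Probability of traversing exactly the steps of the second list, after having already
traversed the history `pre`, when playing strategy `σ`:
the product `∏ σ(prefix)(aᵢ) · δ(sᵢ, aᵢ)(sᵢ₊₁)`. -/
def probFrom (M : MDP S A) (σ : Strat S A) : List (A × S) → List (A × S) → ℝ≥0
  | _, [] => 1
  | pre, (a, s') :: rest =>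
      σ pre a * M.tr (lastState M pre) a s' * probFrom M σ (pre ++ [(a, s')]) rest

/-- Probability of the cylinder of a history under strategy `σ`. -/
def probHist (M : MDP S A) (σ : Strat S A) (h : List (A × S)) : ℝ≥0 :=
  probFrom M σ [] h

/-- The sequence of states `s₁ s₂ … s_n` of a history. -/
def stateSeq (M : MDP S A) (h : List (A × S)) : List S :=
  M.init :: h.map Prod.snd

/-- The history visits the target set `T` exactly at its last state (first visit). -/
def Hits (M : MDP S A) (T : Finset S) (h : List (A × S)) : Prop :=
  (stateSeq M h).getLast (by simp [stateSeq]) ∈ T ∧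
    ∀ s ∈ (stateSeq M h).dropLast, s ∉ T

/-- Accumulated weight (truncated sum) along a history. -/
def tsHist (w : A → ℕ) (h : List (A × S)) : ℕ := (h.map fun p => w p.1).sum

/-- `P^σ ( TS^T ≤ ℓ )`: since all weights are strictly positive, the event
`TS^T ≤ ℓ` is the disjoint union of the cylinders of the histories that hit `T`
at their last state with accumulated weight at most `ℓ`. -/
noncomputable def probTSLe (M : MDP S A) (σ : Strat S A) (w : A → ℕ) (T : Finset S)
    (ℓ : ℕ) : ℝ≥0∞ :=
  ∑' h : {h : List (A × S) // Hits M T h ∧ tsHist w h ≤ ℓ}, (probHist M σ h.1 : ℝ≥0∞)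

/-- `P^σ ( TS^T = ∞ )`: the probability of never reaching `T`. -/
noncomputable def probNoReach (M : MDP S A) (σ : Strat S A) (T : Finset S) : ℝ≥0∞ :=
  1 - ∑' h : {h : List (A × S) // Hits M T h}, (probHist M σ h.1 : ℝ≥0∞)

/-- `E^σ ( TS^T )`, valued in `[0, ∞]`: the truncated sum is determined at the first
visit of `T`, and takes value `∞` on the (measurable) set of runs never reaching `T`. -/
noncomputable def expTS (M : MDP S A) (σ : Strat S A) (w : A → ℕ) (T : Finset S) : ℝ≥0∞ :=
  (∑' h : {h : List (A × S) // Hits M T h},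
      (probHist M σ h.1 : ℝ≥0∞) * (tsHist w h.1 : ℝ≥0∞))
    + probNoReach M σ T * ⊤

/-- A run is encoded as the infinite sequence of its steps `(aᵢ, sᵢ₊₁)`;
`stateAt M ρ n` is the `(n+1)`-st state `s_{n+1}` of the run (`s₁ = init`). -/
def stateAt (M : MDP S A) (ρ : ℕ → A × S) : ℕ → S
  | 0 => M.init
  | n + 1 => (ρ n).2

/-- The run is consistent with strategy `σ`: every step uses an available action, chosen
with positive probability by `σ`, and leads to a successor of positive transition
probability. -/
def Consistent (M : MDP S A) (σ : Strat S A) (ρ : ℕ → A × S) : Prop :=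
  ∀ n : ℕ, (ρ n).1 ∈ M.avail (stateAt M ρ n) ∧
    0 < σ (List.ofFn fun i : Fin n => ρ i) (ρ n).1 ∧
    0 < M.tr (stateAt M ρ n) (ρ n).1 (ρ n).2

open Classical in
/-- Truncated sum `TS^T` of a run: the accumulated weight up to the first visit of `T`,
and `∞` if `T` is never visited. -/
noncomputable def tsRun (M : MDP S A) (w : A → ℕ) (T : Finset S)
    (ρ : ℕ → A × S) : ℝ≥0∞ :=
  if h : ∃ n, stateAt M ρ n ∈ T then
    ((∑ i ∈ Finset.range (Nat.find h), w (ρ i).1 : ℕ) : ℝ≥0∞)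
  else ⊤

end Core

/-!
Let `optCost b s` be the least expected weight needed to reach `T` from `s` when every run
must reach `T` within weight `b` (`⊤` if that cannot be guaranteed). Since weights are
positive, every step lowers the budget, so `optCost` is given by a Bellman equation by
recursion on `b`. Induction on the remaining budget shows that a strategy whose runs all
reach `T` within `ℓ₁` has expected cost at least `optCost ℓ₁ init`: it only ever plays
actions that fit in the remaining budget. Conversely, the pure strategy that, with
accumulated weight `k` in state `s`, plays a minimiser of the Bellman equation for budget
`ℓ₁ - k` keeps `optCost` finite along its runs, hence reaches `T` within `ℓ₁`, and its
expected cost is at most `optCost ℓ₁ init`.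
-/

section Weights

variable {S A : Type} (w : A → ℕ)

@[simp]
lemma tsHist_nil : tsHist w ([] : List (A × S)) = 0 := rfl

@[simp]
lemma tsHist_cons (p : A × S) (h : List (A × S)) :
    tsHist w (p :: h) = w p.1 + tsHist w h := by
  simp [tsHist]

@[simp]
lemma tsHist_concat (h : List (A × S)) (p : A × S) :
    tsHist w (h ++ [p]) = tsHist w h + w p.1 := by
  simp [tsHist]

end Weights

section Histories

variable {S A : Type} [Fintype S] [Fintype A] (M : MDP S A)

@[simp]
lemma lastState_nil : lastState M [] = M.init := rfl

@[simp]
lemma lastState_concat (h : List (A × S)) (p : A × S) : lastState M (h ++ [p]) = p.2 := by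
  simp [lastState]

@[simp]
lemma stateSeq_concat (h : List (A × S)) (p : A × S) :
    stateSeq M (h ++ [p]) = stateSeq M h ++ [p.2] := by
  simp [stateSeq]

lemma lastState_mem_stateSeq (h : List (A × S)) : lastState M h ∈ stateSeq M h := by
  induction h using List.reverseRecOn with
  | nil => simp [stateSeq]
  | append_singleton t p _ => simp

lemma probFrom_cons (σ : Strat S A) (pre : List (A × S)) (p : A × S) (rest : List (A × S)) :
    probFrom M σ pre (p :: rest) =
      σ pre p.1 * M.tr (lastState M pre) p.1 p.2 * probFrom M σ (pre ++ [p]) rest :=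
  rfl

lemma probFrom_append (σ : Strat S A) (l₁ l₂ : List (A × S)) :
    ∀ pre, probFrom M σ pre (l₁ ++ l₂) = probFrom M σ pre l₁ * probFrom M σ (pre ++ l₁) l₂ := by
  induction l₁ with
  | nil => simp [probFrom]
  | cons p t ih =>
    intro pre
    rw [List.cons_append, probFrom_cons, probFrom_cons, ih]
    simp [mul_assoc]

lemma probHist_append (σ : Strat S A) (l₁ l₂ : List (A × S)) :
    probHist M σ (l₁ ++ l₂) = probHist M σ l₁ * probFrom M σ l₁ l₂ := by
  simpa [probHist] using probFrom_append M σ l₁ l₂ []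

lemma probHist_concat (σ : Strat S A) (h : List (A × S)) (p : A × S) :
    probHist M σ (h ++ [p]) = probHist M σ h * (σ h p.1 * M.tr (lastState M h) p.1 p.2) := by
  simp [probHist_append, probFrom]

lemma probHist_concat_ne_zero_iff (σ : Strat S A) (h : List (A × S)) (p : A × S) :
    probHist M σ (h ++ [p]) ≠ 0 ↔
      probHist M σ h ≠ 0 ∧ σ h p.1 ≠ 0 ∧ M.tr (lastState M h) p.1 p.2 ≠ 0 := by
  simp [probHist_concat, not_or]

lemma MDP.sum_tr_coe {s : S} {a : A} (ha : a ∈ M.avail s) :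
    ∑ s' : S, (M.tr s a s' : ℝ≥0∞) = 1 := by
  rw [← ENNReal.ofNNReal_finsetSum, M.tr_sum s a ha, ENNReal.coe_one]

lemma MDP.exists_tr_ne_zero {s : S} {a : A} (ha : a ∈ M.avail s) : ∃ s', M.tr s a s' ≠ 0 := by
  obtain ⟨s', -, hs'⟩ := Finset.exists_ne_zero_of_sum_ne_zero (M.tr_sum s a ha ▸ one_ne_zero)
  exact ⟨s', hs'⟩

end Histories

section Strategies

variable {S A : Type} [Fintype S] [Fintype A] {M : MDP S A} {σ : Strat S A}

lemma IsStrategy.sum_coe (hσ : IsStrategy M σ) (h : List (A × S)) :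
    ∑ a : A, (σ h a : ℝ≥0∞) = 1 := by
  rw [← ENNReal.ofNNReal_finsetSum, (hσ h).2, ENNReal.coe_one]

lemma IsStrategy.mem_avail (hσ : IsStrategy M σ) {h : List (A × S)} {a : A} (ha : σ h a ≠ 0) :
    a ∈ M.avail (lastState M h) := by
  by_contra hna
  exact ha ((hσ h).1 a hna)

lemma IsStrategy.exists_step_ne_zero (hσ : IsStrategy M σ) (h : List (A × S)) :
    ∃ p : A × S, σ h p.1 ≠ 0 ∧ M.tr (lastState M h) p.1 p.2 ≠ 0 := by
  obtain ⟨a, -, ha⟩ := Finset.exists_ne_zero_of_sum_ne_zero ((hσ h).2 ▸ one_ne_zero)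
  obtain ⟨s', hs'⟩ := M.exists_tr_ne_zero (hσ.mem_avail ha)
  exact ⟨(a, s'), ha, hs'⟩

lemma IsStrategy.sum_mul_tr (hσ : IsStrategy M σ) (h : List (A × S)) :
    ∑ p : A × S, (σ h p.1 : ℝ≥0∞) * M.tr (lastState M h) p.1 p.2 = 1 := by
  rw [Fintype.sum_prod_type, ← hσ.sum_coe h]
  refine Finset.sum_congr rfl fun a _ => ?_
  dsimp only
  by_cases ha : σ h a = 0
  · simp [ha]
  · rw [← Finset.mul_sum, M.sum_tr_coe (hσ.mem_avail ha), mul_one]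

end Strategies

section Runs

variable {S A : Type}

def runPrefix (ρ : ℕ → A × S) (n : ℕ) : List (A × S) := List.ofFn fun i : Fin n => ρ i

@[simp]
lemma length_runPrefix (ρ : ℕ → A × S) (n : ℕ) : (runPrefix ρ n).length = n := by
  simp [runPrefix]

lemma runPrefix_succ (ρ : ℕ → A × S) (n : ℕ) : runPrefix ρ (n + 1) = runPrefix ρ n ++ [ρ n] := by
  simp only [runPrefix, List.ofFn_succ', List.concat_eq_append, Fin.val_castSucc, Fin.val_last]

lemma tsHist_runPrefix (w : A → ℕ) (ρ : ℕ → A × S) (n : ℕ) :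
    tsHist w (runPrefix ρ n) = ∑ i ∈ Finset.range n, w (ρ i).1 := by
  induction n with
  | zero => rfl
  | succ n ih => rw [runPrefix_succ, tsHist_concat, ih, Finset.sum_range_succ]

def histIter (next : List (A × S) → A × S) : ℕ → List (A × S)
  | 0 => []
  | n + 1 => histIter next n ++ [next (histIter next n)]

lemma runPrefix_histIter (next : List (A × S) → A × S) (n : ℕ) :
    runPrefix (fun k => next (histIter next k)) n = histIter next n := by
  induction n with
  | zero => rfl
  | succ n ih => rw [runPrefix_succ, ih, histIter]

variable [Fintype S] [Fintype A] {M : MDP S A} {σ : Strat S A}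

lemma lastState_runPrefix (ρ : ℕ → A × S) (n : ℕ) :
    lastState M (runPrefix ρ n) = stateAt M ρ n := by
  cases n with
  | zero => rfl
  | succ n => rw [runPrefix_succ, lastState_concat, stateAt]

lemma stateSeq_runPrefix (ρ : ℕ → A × S) (n : ℕ) :
    stateSeq M (runPrefix ρ n) = List.ofFn fun i : Fin (n + 1) => stateAt M ρ i := by
  simp [stateSeq, runPrefix, List.ofFn_succ, List.map_ofFn, Function.comp_def, stateAt]

lemma avoids_dropLast_stateSeq_runPrefix_iff (T : Finset S) (ρ : ℕ → A × S) (n : ℕ) :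
    (∀ x ∈ (stateSeq M (runPrefix ρ n)).dropLast, x ∉ T) ↔ ∀ m < n, stateAt M ρ m ∉ T := by
  rw [stateSeq_runPrefix, List.ofFn_succ', List.concat_eq_append, List.dropLast_concat]
  simp [List.mem_ofFn, Fin.forall_iff]

lemma probHist_ne_zero_of_append {l₁ l₂ : List (A × S)} (h : probHist M σ (l₁ ++ l₂) ≠ 0) :
    probHist M σ l₁ ≠ 0 := by
  rw [probHist_append] at h
  exact left_ne_zero_of_mul h

lemma Consistent.probHist_runPrefix_ne_zero {ρ : ℕ → A × S} (hρ : Consistent M σ ρ) (n : ℕ) :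
    probHist M σ (runPrefix ρ n) ≠ 0 := by
  induction n with
  | zero => simp [probHist, probFrom, runPrefix]
  | succ n ih =>
    obtain ⟨-, hσ, htr⟩ := hρ n
    rw [runPrefix_succ, probHist_concat_ne_zero_iff, lastState_runPrefix]
    exact ⟨ih, hσ.ne', htr.ne'⟩

lemma consistent_of_forall_probHist_ne_zero (hσ : IsStrategy M σ) {ρ : ℕ → A × S}
    (hρ : ∀ n, probHist M σ (runPrefix ρ n) ≠ 0) : Consistent M σ ρ := by
  intro n
  obtain ⟨-, hσn, htr⟩ := (probHist_concat_ne_zero_iff M σ _ _).1 (runPrefix_succ ρ n ▸ hρ (n + 1))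
  have havail := hσ.mem_avail hσn
  rw [lastState_runPrefix] at htr havail
  exact ⟨havail, pos_iff_ne_zero.2 hσn, pos_iff_ne_zero.2 htr⟩

lemma IsStrategy.exists_consistent_runPrefix_eq (hσ : IsStrategy M σ) {h : List (A × S)}
    (hh : probHist M σ h ≠ 0) : ∃ ρ, Consistent M σ ρ ∧ runPrefix ρ h.length = h := by
  choose step hstep using hσ.exists_step_ne_zero
  let next : List (A × S) → A × S := fun g => h.getD g.length (step g)
  have hlen (n : ℕ) : (histIter next n).length = n := by
    rw [← runPrefix_histIter, length_runPrefix]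
  have htake (n : ℕ) (hn : n ≤ h.length) : histIter next n = h.take n := by
    induction n with
    | zero => rfl
    | succ n ih =>
      have hnext : next (h.take n) = h[n] := by
        simp [next, Nat.min_eq_left (by omega : n ≤ h.length), List.getElem?_eq_getElem hn]
      rw [histIter, ih (by omega), hnext, List.take_add_one, List.getElem?_eq_getElem (by omega)]
      rfl
  have hpos (n : ℕ) : probHist M σ (histIter next n) ≠ 0 := by
    induction n with
    | zero => simp [histIter, probHist, probFrom]
    | succ n ih =>
      by_cases hn : n + 1 ≤ h.length
      · rw [htake _ hn]
        exact probHist_ne_zero_of_append (l₂ := h.drop (n + 1)) (by rwa [List.take_append_drop])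
      · have hnext : next (histIter next n) = step (histIter next n) := by
          simp only [next, hlen]
          exact List.getD_eq_default _ _ (by omega)
        rw [histIter, probHist_concat_ne_zero_iff, hnext]
        exact ⟨ih, hstep _⟩
  refine ⟨fun k => next (histIter next k),
    consistent_of_forall_probHist_ne_zero hσ fun n => ?_, ?_⟩
  · rw [runPrefix_histIter]
    exact hpos n
  · rw [runPrefix_histIter, htake _ le_rfl, List.take_length]

end Runs

section WorstCase

open Classical

variable {S A : Type} [Fintype S] [Fintype A] {M : MDP S A} {σ : Strat S A} {w : A → ℕ}
  {T : Finset S} {ℓ : ℕ}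

lemma tsHist_runPrefix_le_tsRun {ρ : ℕ → A × S} {n : ℕ} (hT : ∀ m < n, stateAt M ρ m ∉ T) :
    (tsHist w (runPrefix ρ n) : ℝ≥0∞) ≤ tsRun M w T ρ := by
  rw [tsRun]
  split_ifs with hex
  · have hn : n ≤ Nat.find hex := not_lt.1 fun hlt => hT _ hlt (Nat.find_spec hex)
    rw [tsHist_runPrefix]
    exact_mod_cast Finset.sum_le_sum_of_subset (Finset.range_subset_range.2 hn)
  · exact le_top

lemma tsHist_le_of_forall_tsRun_le (hσ : IsStrategy M σ)
    (hrun : ∀ ρ, Consistent M σ ρ → tsRun M w T ρ ≤ ℓ) {h : List (A × S)}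
    (hh : probHist M σ h ≠ 0) (hT : ∀ x ∈ (stateSeq M h).dropLast, x ∉ T) :
    tsHist w h ≤ ℓ := by
  obtain ⟨ρ, hρ, hρh⟩ := hσ.exists_consistent_runPrefix_eq hh
  rw [← hρh, avoids_dropLast_stateSeq_runPrefix_iff] at hT
  rw [← hρh]
  exact_mod_cast (tsHist_runPrefix_le_tsRun hT).trans (hrun ρ hρ)

lemma tsRun_le_of_forall_tsHist_le (hw : ∀ a, 1 ≤ w a) {ρ : ℕ → A × S}
    (hρ : Consistent M σ ρ)
    (hhist : ∀ h, probHist M σ h ≠ 0 → (∀ x ∈ (stateSeq M h).dropLast, x ∉ T) →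
      tsHist w h ≤ ℓ) :
    tsRun M w T ρ ≤ ℓ := by
  have hsum (n : ℕ) (hn : ∀ m < n, stateAt M ρ m ∉ T) : ∑ i ∈ Finset.range n, w (ρ i).1 ≤ ℓ :=
    tsHist_runPrefix w ρ n ▸ hhist _ (hρ.probHist_runPrefix_ne_zero n)
      ((avoids_dropLast_stateSeq_runPrefix_iff T ρ n).2 hn)
  rw [tsRun]
  split_ifs with hex
  · exact_mod_cast hsum _ fun m hm => Nat.find_min hex hm
  · push Not at hex
    have hle := hsum (ℓ + 1) fun m _ => hex m
    have hge : ℓ + 1 ≤ ∑ i ∈ Finset.range (ℓ + 1), w (ρ i).1 := by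
      simpa using Finset.sum_le_sum fun i (_ : i ∈ Finset.range (ℓ + 1)) => hw (ρ i).1
    omega

end WorstCase

section OptimalCost

open Classical

variable {S A : Type} [Fintype S] [Fintype A] (M : MDP S A) (w : A → ℕ) (T : Finset S)

-- `0 < w a` makes `optCost` well founded in the budget without assuming positive weights.
def affordableActions (b : ℕ) (s : S) : Finset A :=
  (M.avail s).filter fun a => 0 < w a ∧ w a ≤ b

noncomputable def optCost (b : ℕ) (s : S) : ℝ≥0∞ :=
  if s ∈ T then 0 else
    (affordableActions M w b s).attach.inf fun a =>
      ∑ s' : S, (M.tr s a s' : ℝ≥0∞) * (w a + optCost (b - w a) s')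
termination_by b
decreasing_by
  have ha := a.2
  simp only [affordableActions, Finset.mem_filter] at ha
  omega

noncomputable def actionCost (b : ℕ) (s : S) (a : A) : ℝ≥0∞ :=
  ∑ s' : S, (M.tr s a s' : ℝ≥0∞) * (w a + optCost M w T (b - w a) s')

noncomputable def optAction (b : ℕ) (s : S) : A :=
  if h : ∃ a ∈ affordableActions M w b s, actionCost M w T b s a = optCost M w T b s then
    h.choose
  -- reached only when `optCost M w T b s = ⊤`; any available action will do
  else (M.avail_nonempty s).choose

noncomputable def budgetStrat (ℓ : ℕ) : Strat S A :=
  fun h a => if a = optAction M w T (ℓ - tsHist w h) (lastState M h) then 1 else 0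

variable {M w T} {b : ℕ} {s : S} {a : A}

lemma mem_affordableActions :
    a ∈ affordableActions M w b s ↔ a ∈ M.avail s ∧ 0 < w a ∧ w a ≤ b :=
  Finset.mem_filter

lemma optCost_eq :
    optCost M w T b s =
      if s ∈ T then 0 else (affordableActions M w b s).inf (actionCost M w T b s) := by
  rw [optCost]
  exact if_congr Iff.rfl rfl (Finset.inf_attach _ (actionCost M w T b s))

lemma optCost_of_mem (hs : s ∈ T) : optCost M w T b s = 0 := by
  rw [optCost_eq, if_pos hs]

lemma optCost_le_actionCost (hs : s ∉ T) (ha : a ∈ affordableActions M w b s) :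
    optCost M w T b s ≤ actionCost M w T b s a := by
  rw [optCost_eq, if_neg hs]
  exact Finset.inf_le ha

lemma optAction_spec (hs : s ∉ T) (hv : optCost M w T b s ≠ ⊤) :
    optAction M w T b s ∈ affordableActions M w b s ∧
      actionCost M w T b s (optAction M w T b s) = optCost M w T b s := by
  have hex : ∃ a ∈ affordableActions M w b s, actionCost M w T b s a = optCost M w T b s := by
    rw [optCost_eq, if_neg hs] at hv ⊢
    rcases (affordableActions M w b s).eq_empty_or_nonempty with he | hne
    · simp [he] at hv
    obtain ⟨a, ha, hinf⟩ := Finset.exists_mem_eq_inf _ hne (actionCost M w T b s)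
    exact ⟨a, ha, hinf.symm⟩
  rw [optAction, dif_pos hex]
  exact hex.choose_spec

lemma optAction_mem_avail : optAction M w T b s ∈ M.avail s := by
  unfold optAction
  split_ifs with h
  · exact (mem_affordableActions.1 h.choose_spec.1).1
  · exact (M.avail_nonempty s).choose_spec

lemma optCost_ne_top_of_actionCost_ne_top (hQ : actionCost M w T b s a ≠ ⊤) {s' : S}
    (htr : M.tr s a s' ≠ 0) : optCost M w T (b - w a) s' ≠ ⊤ := by
  intro htop
  refine hQ (ENNReal.sum_eq_top.2 ⟨s', Finset.mem_univ _, ?_⟩)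
  rw [htop, add_top]
  exact ENNReal.mul_top (by exact_mod_cast htr)

lemma sum_tr_le_actionCost {X : S → ℝ≥0∞}
    (hX : ∀ s', M.tr s a s' ≠ 0 → s' ∉ T → X s' ≤ optCost M w T (b - w a) s') :
    ∑ s', (M.tr s a s' : ℝ≥0∞) * (w a + if s' ∈ T then 0 else X s') ≤ actionCost M w T b s a := by
  refine Finset.sum_le_sum fun s' _ => ?_
  by_cases htr : M.tr s a s' = 0
  · simp [htr]
  gcongr
  split_ifs with hs'
  · exact zero_le
  · exact hX s' htr hs'

lemma actionCost_le_sum_tr {X : S → ℝ≥0∞}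
    (hX : ∀ s', M.tr s a s' ≠ 0 → s' ∉ T → optCost M w T (b - w a) s' ≤ X s') :
    actionCost M w T b s a ≤ ∑ s', (M.tr s a s' : ℝ≥0∞) * (w a + if s' ∈ T then 0 else X s') := by
  refine Finset.sum_le_sum fun s' _ => ?_
  by_cases htr : M.tr s a s' = 0
  · simp [htr]
  gcongr
  split_ifs with hs'
  · rw [optCost_of_mem hs']
  · exact hX s' htr hs'

variable (M w T)

lemma isStrategy_budgetStrat (ℓ : ℕ) : IsStrategy M (budgetStrat M w T ℓ) := by
  refine fun h => ⟨fun a ha => ?_, by simp [budgetStrat]⟩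
  have hne : a ≠ optAction M w T (ℓ - tsHist w h) (lastState M h) :=
    fun heq => ha (heq ▸ optAction_mem_avail)
  simp [budgetStrat, hne]

lemma isPure_budgetStrat (ℓ : ℕ) : IsPure (budgetStrat M w T ℓ) :=
  fun h => ⟨optAction M w T (ℓ - tsHist w h) (lastState M h), by simp [budgetStrat]⟩

lemma budgetStrat_congr (ℓ : ℕ) {h h' : List (A × S)} (hs : lastState M h = lastState M h')
    (hts : tsHist w h = tsHist w h') : budgetStrat M w T ℓ h = budgetStrat M w T ℓ h' := by
  unfold budgetStrat
  rw [hs, hts]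

variable {M w T}

lemma budgetStrat_tsHist_le_and_optCost_ne_top {ℓ : ℕ} (hv : optCost M w T ℓ M.init ≠ ⊤)
    (h : List (A × S)) (hh : probHist M (budgetStrat M w T ℓ) h ≠ 0)
    (hT : ∀ x ∈ (stateSeq M h).dropLast, x ∉ T) :
    tsHist w h ≤ ℓ ∧ optCost M w T (ℓ - tsHist w h) (lastState M h) ≠ ⊤ := by
  induction h using List.reverseRecOn with
  | nil => simpa using hv
  | append_singleton h p ih =>
    obtain ⟨hh, hp, htr⟩ := (probHist_concat_ne_zero_iff M _ h p).1 hh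
    rw [stateSeq_concat, List.dropLast_concat] at hT
    obtain ⟨hle, hv⟩ := ih hh fun x hx => hT x (List.dropLast_subset _ hx)
    have hs : lastState M h ∉ T := hT _ (lastState_mem_stateSeq M h)
    have hpa : p.1 = optAction M w T (ℓ - tsHist w h) (lastState M h) := by
      by_contra hne
      simp [budgetStrat, hne] at hp
    obtain ⟨ha, hcost⟩ := optAction_spec hs hv
    rw [← hpa] at ha hcost
    have hwa := (mem_affordableActions.1 ha).2.2
    rw [tsHist_concat, lastState_concat, show ℓ - (tsHist w h + w p.1) = ℓ - tsHist w h - w p.1 by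
      omega]
    exact ⟨by omega, optCost_ne_top_of_actionCost_ne_top (hcost ▸ hv) htr⟩

lemma tsRun_budgetStrat_le (hw : ∀ a, 1 ≤ w a) {ℓ : ℕ} (hv : optCost M w T ℓ M.init ≠ ⊤)
    {ρ : ℕ → A × S} (hρ : Consistent M (budgetStrat M w T ℓ) ρ) : tsRun M w T ρ ≤ ℓ :=
  tsRun_le_of_forall_tsHist_le hw hρ fun h hh hT =>
    (budgetStrat_tsHist_le_and_optCost_ne_top hv h hh hT).1

end OptimalCost

section Reaching

open Classical

variable {S A : Type}

-- Only the states entered along the list are tested, not the state it starts from.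
def FirstHitAtEnd (T : Finset S) : List (A × S) → Prop
  | [] => False
  | (_, s) :: rest => (s ∈ T ∧ rest = []) ∨ (s ∉ T ∧ FirstHitAtEnd T rest)

lemma firstHitAtEnd_concat (T : Finset S) (h : List (A × S)) (p : A × S) :
    FirstHitAtEnd T (h ++ [p]) ↔ p.2 ∈ T ∧ ∀ q ∈ h, q.2 ∉ T := by
  induction h with
  | nil => simp [FirstHitAtEnd]
  | cons q h ih =>
    by_cases hq : q.2 ∈ T <;> simp [FirstHitAtEnd, hq, ih]

lemma tsum_list_eq_sum_cons {α : Type*} [Fintype α] (f : List α → ℝ≥0∞) (h0 : f [] = 0) :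
    ∑' l, f l = ∑ x, ∑' l, f (x :: l) := by
  have hinj : Function.Injective fun q : α × List α => q.1 :: q.2 :=
    fun q q' hq => Prod.ext (List.cons.inj hq).1 (List.cons.inj hq).2
  have hsupp : Function.support f ⊆ Set.range fun q : α × List α => q.1 :: q.2 := by
    rintro (_ | ⟨x, l⟩) hl
    · exact absurd h0 hl
    · exact ⟨(x, l), rfl⟩
  rw [← hinj.tsum_eq hsupp, ENNReal.tsum_prod (f := fun x l => f (x :: l)), tsum_fintype]

variable [Fintype S] [Fintype A] {M : MDP S A} {T : Finset S} {σ : Strat S A} {w : A → ℕ}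

lemma hits_concat (h : List (A × S)) (p : A × S) :
    Hits M T (h ++ [p]) ↔ p.2 ∈ T ∧ ∀ x ∈ stateSeq M h, x ∉ T := by
  simp only [Hits, stateSeq_concat, List.dropLast_concat, List.getLast_append_singleton]

lemma hits_iff_firstHitAtEnd (hi : M.init ∉ T) (h : List (A × S)) :
    Hits M T h ↔ FirstHitAtEnd T h := by
  induction h using List.reverseRecOn with
  | nil => simp [Hits, stateSeq, FirstHitAtEnd, hi]
  | append_singleton h p _ =>
    simp only [hits_concat, firstHitAtEnd_concat, stateSeq, List.mem_cons, List.mem_map]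
    grind

lemma hits_iff_eq_nil (hi : M.init ∈ T) (h : List (A × S)) : Hits M T h ↔ h = [] := by
  induction h using List.reverseRecOn with
  | nil => simp [Hits, stateSeq, hi]
  | append_singleton h p _ => simp [hits_concat, stateSeq, hi]

variable (M T σ w)

noncomputable def hitSum (h : List (A × S)) (f : List (A × S) → ℝ≥0∞) : ℝ≥0∞ :=
  ∑' rest, if FirstHitAtEnd T rest then (probFrom M σ h rest : ℝ≥0∞) * f rest else 0

noncomputable def reachProb (h : List (A × S)) : ℝ≥0∞ := hitSum M T σ h fun _ => 1

noncomputable def reachCost (h : List (A × S)) : ℝ≥0∞ :=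
  hitSum M T σ h fun rest => tsHist w rest

variable {M T σ w}

lemma hitSum_eq_sum (h : List (A × S)) (f : List (A × S) → ℝ≥0∞) :
    hitSum M T σ h f = ∑ p : A × S, (σ h p.1 : ℝ≥0∞) * M.tr (lastState M h) p.1 p.2 *
      if p.2 ∈ T then f [p] else hitSum M T σ (h ++ [p]) fun rest => f (p :: rest) := by
  rw [hitSum, tsum_list_eq_sum_cons _ (by simp [FirstHitAtEnd])]
  refine Finset.sum_congr rfl fun ⟨a, s⟩ _ => ?_
  by_cases hs : s ∈ T
  · rw [tsum_eq_single []]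
    · simp [FirstHitAtEnd, hs, probFrom]
    · intro l hl
      simp [FirstHitAtEnd, hs, hl]
  · simp only [FirstHitAtEnd, hs, false_and, false_or, not_false_eq_true, true_and, if_false,
      hitSum, probFrom_cons, ← ENNReal.tsum_mul_left]
    refine tsum_congr fun l => ?_
    split_ifs <;> simp [mul_assoc]

lemma hitSum_const_add (h : List (A × S)) (c : ℝ≥0∞) (f : List (A × S) → ℝ≥0∞) :
    hitSum M T σ h (fun rest => c + f rest) =
      c * hitSum M T σ h (fun _ => 1) + hitSum M T σ h f := by
  simp only [hitSum, ← ENNReal.tsum_mul_left, ← ENNReal.tsum_add]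
  refine tsum_congr fun l => ?_
  split_ifs <;> ring

end Reaching

section Bounds

open Classical

variable {S A : Type} [Fintype S] [Fintype A] {M : MDP S A} {T : Finset S} {σ : Strat S A}
  {w : A → ℕ}

lemma reachProb_eq_one_and_reachCost_eq (hσ : IsStrategy M σ) (h : List (A × S))
    (hsucc : ∀ p : A × S, σ h p.1 ≠ 0 → M.tr (lastState M h) p.1 p.2 ≠ 0 → p.2 ∉ T →
      reachProb M T σ (h ++ [p]) = 1) :
    reachProb M T σ h = 1 ∧
      reachCost M T σ w h = ∑ a, (σ h a : ℝ≥0∞) * ∑ s', (M.tr (lastState M h) a s' : ℝ≥0∞) *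
        (w a + if s' ∈ T then 0 else reachCost M T σ w (h ++ [(a, s')])) := by
  constructor
  · rw [reachProb, hitSum_eq_sum]
    refine (Finset.sum_congr rfl fun p _ => ?_).trans (hσ.sum_mul_tr h)
    by_cases hp : σ h p.1 = 0 ∨ M.tr (lastState M h) p.1 p.2 = 0
    · rcases hp with hp | hp <;> simp [hp]
    · push Not at hp
      split_ifs with hs
      · rw [mul_one]
      · rw [show (hitSum M T σ (h ++ [p]) fun _ => 1) = 1 from hsucc p hp.1 hp.2 hs, mul_one]
  · rw [reachCost, hitSum_eq_sum, Fintype.sum_prod_type]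
    refine Finset.sum_congr rfl fun a _ => ?_
    rw [Finset.mul_sum]
    refine Finset.sum_congr rfl fun s _ => ?_
    rw [← mul_assoc]
    by_cases hp : σ h a = 0 ∨ M.tr (lastState M h) a s = 0
    · rcases hp with hp | hp <;> simp [hp]
    · push Not at hp
      congr 1
      split_ifs with hs
      · simp
      · simp only [tsHist_cons, Nat.cast_add, hitSum_const_add]
        rw [show (hitSum M T σ (h ++ [(a, s)]) fun _ => 1) = 1 from hsucc (a, s) hp.1 hp.2 hs,
          mul_one]
        rfl

lemma reachProb_budgetStrat_eq_one_and_reachCost_le (ℓ b : ℕ) :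
    ∀ h : List (A × S), tsHist w h + b = ℓ → lastState M h ∉ T →
      optCost M w T b (lastState M h) ≠ ⊤ →
      reachProb M T (budgetStrat M w T ℓ) h = 1 ∧
        reachCost M T (budgetStrat M w T ℓ) w h ≤ optCost M w T b (lastState M h) := by
  induction b using Nat.strong_induction_on with
  | _ b ih =>
  intro h hb hs hv
  obtain ⟨ha, hcost⟩ := optAction_spec hs hv
  set a := optAction M w T b (lastState M h)
  have hσ (a' : A) : budgetStrat M w T ℓ h a' = if a' = a then 1 else 0 := by
    simp only [budgetStrat, a, show ℓ - tsHist w h = b by omega]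
  obtain ⟨-, hwpos, hwb⟩ := mem_affordableActions.1 ha
  have hnext (s' : S) (htr : M.tr (lastState M h) a s' ≠ 0) (hs' : s' ∉ T) :
      reachProb M T (budgetStrat M w T ℓ) (h ++ [(a, s')]) = 1 ∧
        reachCost M T (budgetStrat M w T ℓ) w (h ++ [(a, s')]) ≤ optCost M w T (b - w a) s' := by
    have hv' := optCost_ne_top_of_actionCost_ne_top (hcost ▸ hv) htr
    simpa using ih (b - w a) (by omega) (h ++ [(a, s')]) (by simp; omega) (by simpa using hs')
      (by simpa using hv')
  have hsucc (p : A × S) (hp : budgetStrat M w T ℓ h p.1 ≠ 0)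
      (htr : M.tr (lastState M h) p.1 p.2 ≠ 0) (hs' : p.2 ∉ T) :
      reachProb M T (budgetStrat M w T ℓ) (h ++ [p]) = 1 := by
    have hpa : p.1 = a := by
      by_contra hne
      simp [hσ, hne] at hp
    obtain ⟨a', s'⟩ := p
    subst hpa
    exact (hnext s' htr hs').1
  obtain ⟨hprob, hcost_eq⟩ :=
    reachProb_eq_one_and_reachCost_eq (w := w) (isStrategy_budgetStrat M w T ℓ) h hsucc
  refine ⟨hprob, ?_⟩
  rw [hcost_eq, Finset.sum_eq_single a (fun a' _ hne => by simp [hσ, hne]) (by simp), hσ,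
    if_pos rfl, ENNReal.coe_one, one_mul, ← hcost]
  exact sum_tr_le_actionCost fun s' htr hs' => (hnext s' htr hs').2

lemma reachProb_eq_one_and_optCost_le_reachCost (hw : ∀ a, 1 ≤ w a) (hσ : IsStrategy M σ)
    {ℓ : ℕ} (hwc : ∀ h, probHist M σ h ≠ 0 → (∀ x ∈ (stateSeq M h).dropLast, x ∉ T) →
      tsHist w h ≤ ℓ) (b : ℕ) :
    ∀ h : List (A × S), tsHist w h + b = ℓ → probHist M σ h ≠ 0 →
      (∀ x ∈ stateSeq M h, x ∉ T) →
      reachProb M T σ h = 1 ∧ optCost M w T b (lastState M h) ≤ reachCost M T σ w h := by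
  induction b using Nat.strong_induction_on with
  | _ b ih =>
  intro h hb hh hT
  have hs : lastState M h ∉ T := hT _ (lastState_mem_stateSeq M h)
  have hnext (p : A × S) (hp : σ h p.1 ≠ 0) (htr : M.tr (lastState M h) p.1 p.2 ≠ 0) :
      w p.1 ≤ b ∧ (p.2 ∉ T → reachProb M T σ (h ++ [p]) = 1 ∧
        optCost M w T (b - w p.1) p.2 ≤ reachCost M T σ w (h ++ [p])) := by
    have hh' : probHist M σ (h ++ [p]) ≠ 0 := (probHist_concat_ne_zero_iff M σ h p).2 ⟨hh, hp, htr⟩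
    have hwb : w p.1 ≤ b := by
      have := hwc _ hh' (by simpa using hT)
      simp only [tsHist_concat] at this
      omega
    refine ⟨hwb, fun hs' => ?_⟩
    have hwp := hw p.1
    simpa using ih (b - w p.1) (by omega) (h ++ [p]) (by simp; omega) hh'
      (by simpa [or_imp, forall_and] using ⟨hT, hs'⟩)
  have haff (a : A) (ha : σ h a ≠ 0) : a ∈ affordableActions M w b (lastState M h) := by
    obtain ⟨s', htr⟩ := M.exists_tr_ne_zero (hσ.mem_avail ha)
    exact mem_affordableActions.2 ⟨hσ.mem_avail ha, hw a, (hnext (a, s') ha htr).1⟩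
  obtain ⟨hprob, hcost_eq⟩ := reachProb_eq_one_and_reachCost_eq (w := w) hσ h
    fun p hp htr hs' => ((hnext p hp htr).2 hs').1
  refine ⟨hprob, ?_⟩
  rw [hcost_eq]
  calc optCost M w T b (lastState M h)
      = ∑ a, (σ h a : ℝ≥0∞) * optCost M w T b (lastState M h) := by
        rw [← Finset.sum_mul, hσ.sum_coe, one_mul]
    _ ≤ _ := by
        refine Finset.sum_le_sum fun a _ => ?_
        by_cases ha : σ h a = 0
        · simp [ha]
        refine mul_le_mul_right ((optCost_le_actionCost hs (haff a ha)).trans ?_) _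
        exact actionCost_le_sum_tr fun s' htr hs' => ((hnext (a, s') ha htr).2 hs').2

end Bounds

section Expectation

open Classical

variable {S A : Type} [Fintype S] [Fintype A] {M : MDP S A} {T : Finset S} {σ : Strat S A}
  {w : A → ℕ}

lemma tsum_hits (f : List (A × S) → ℝ≥0∞) :
    ∑' h : {h : List (A × S) // Hits M T h}, f h.1 = ∑' h, if Hits M T h then f h else 0 :=
  (tsum_subtype {h | Hits M T h} f).trans (tsum_congr fun _ => Set.indicator_apply _ _ _)

lemma expTS_eq_zero_of_init_mem (hi : M.init ∈ T) : expTS M σ w T = 0 := by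
  rw [expTS, probNoReach, tsum_hits fun h => (probHist M σ h : ℝ≥0∞) * tsHist w h,
    tsum_hits fun h => (probHist M σ h : ℝ≥0∞)]
  simp [hits_iff_eq_nil hi, probHist, probFrom]

lemma expTS_eq_of_init_not_mem (hi : M.init ∉ T) :
    expTS M σ w T = reachCost M T σ w [] + (1 - reachProb M T σ []) * ⊤ := by
  rw [expTS, probNoReach, tsum_hits fun h => (probHist M σ h : ℝ≥0∞) * tsHist w h,
    tsum_hits fun h => (probHist M σ h : ℝ≥0∞)]
  simp only [hits_iff_firstHitAtEnd hi, reachCost, reachProb, hitSum, probHist, mul_one]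

lemma optCost_le_expTS (hw : ∀ a, 1 ≤ w a) (hσ : IsStrategy M σ) {ℓ : ℕ}
    (hrun : ∀ ρ, Consistent M σ ρ → tsRun M w T ρ ≤ ℓ) :
    optCost M w T ℓ M.init ≤ expTS M σ w T := by
  by_cases hi : M.init ∈ T
  · simp [optCost_of_mem hi]
  rw [expTS_eq_of_init_not_mem hi]
  refine le_add_right (reachProb_eq_one_and_optCost_le_reachCost hw hσ
    (fun h hh hT => tsHist_le_of_forall_tsRun_le hσ hrun hh hT) ℓ [] (by simp)
    (by simp [probHist, probFrom]) (by simpa [stateSeq] using hi)).2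

lemma expTS_budgetStrat_le {ℓ : ℕ} (hv : optCost M w T ℓ M.init ≠ ⊤) :
    expTS M (budgetStrat M w T ℓ) w T ≤ optCost M w T ℓ M.init := by
  by_cases hi : M.init ∈ T
  · simp [expTS_eq_zero_of_init_mem hi]
  obtain ⟨hprob, hcost⟩ :=
    reachProb_budgetStrat_eq_one_and_reachCost_le (M := M) ℓ ℓ [] (by simp) hi hv
  rw [expTS_eq_of_init_not_mem hi, hprob]
  simpa using hcost

end Expectation

/-- beyond worst-case synthesis. If some strategy simultaneously
guarantees the worst-case bound `ℓ₁` on every consistent run and expectation at most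
`ℓ₂`, then some pure strategy whose choice only depends on the last state of the
history together with the accumulated weight (a pure finite-memory strategy, since the
accumulated weight stays at most `ℓ₁` along consistent runs) does as well. -/
theorem stmt3 {S A : Type} [Fintype S] [Fintype A] (M : MDP S A)
    (w : A → ℕ) (hw : ∀ a, 1 ≤ w a) (T : Finset S) (ℓ₁ ℓ₂ : ℕ)
    (hex : ∃ σ : Strat S A, IsStrategy M σ ∧
      (∀ ρ : ℕ → A × S, Consistent M σ ρ → tsRun M w T ρ ≤ (ℓ₁ : ℝ≥0∞)) ∧
      expTS M σ w T ≤ (ℓ₂ : ℝ≥0∞)) :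
    ∃ σ' : Strat S A, IsStrategy M σ' ∧ IsPure σ' ∧
      (∀ h h' : List (A × S), lastState M h = lastState M h' →
        tsHist w h = tsHist w h' → σ' h = σ' h') ∧
      (∀ ρ : ℕ → A × S, Consistent M σ' ρ → tsRun M w T ρ ≤ (ℓ₁ : ℝ≥0∞)) ∧
      expTS M σ' w T ≤ (ℓ₂ : ℝ≥0∞) := by
  obtain ⟨σ, hσ, hrun, hexp⟩ := hex
  have hopt : optCost M w T ℓ₁ M.init ≤ ℓ₂ := (optCost_le_expTS hw hσ hrun).trans hexp
  have hv : optCost M w T ℓ₁ M.init ≠ ⊤ := ne_top_of_le_ne_top (ENNReal.natCast_ne_top ℓ₂) hopt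
  exact ⟨budgetStrat M w T ℓ₁, isStrategy_budgetStrat M w T ℓ₁, isPure_budgetStrat M w T ℓ₁,
    fun _ _ => budgetStrat_congr M w T ℓ₁, fun _ => tsRun_budgetStrat_le hw hv,
    (expTS_budgetStrat_le hv).trans hopt⟩
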